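/- The metric space (Ω/∼_R, d) is complete, and consequently for every infinite path {Γ₁, Γ₂, …} in covtree the nested intersection ⋂ₙ [cert(Γₙ)]_R contains exactly one point (Cantor's intersection theorem applied to the nested closed sets of vanishing diameter). -/

import Mathlib

/-- A finite labeled order: a partial order structure on `Fin n`. -/
abbrev FinOrd (n : ℕ) := PartialOrder (Fin n)

/-- Isomorphism of two orders on `Fin n`. -/
def OrdIso {n : ℕ} (p q : FinOrd n) : Prop :=
  Nonempty (p.le ≃r q.le)

instance ordSetoid (n : ℕ) : Setoid (FinOrd n) where
  r := OrdIso
  iseqv := by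
    refine ⟨fun p => ⟨RelIso.refl _⟩, ?_, ?_⟩
    · rintro p q ⟨e⟩; exact ⟨e.symm⟩
    · rintro p q r ⟨e⟩ ⟨f⟩; exact ⟨e.trans f⟩

/-- An `n`-order: an isomorphism class of partial orders of cardinality `n`. -/
def NOrder (n : ℕ) := Quotient (ordSetoid n)

/-- `B` (a partial order on `Fin n`) occurs as a stem (finite downward-closed
subcauset) in the partial order `p` on `α`. -/
def StemIn {n : ℕ} {α : Type*} (B : FinOrd n) (p : PartialOrder α) : Prop :=
  ∃ f : Fin n → α, Function.Injective f ∧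
    (∀ i j : Fin n, B.le i j ↔ p.le (f i) (f j)) ∧
    (∀ (i : Fin n) (y : α), p.lt y (f i) → ∃ j : Fin n, f j = y)

/-- The `n`-order `B` is a stem in the order `p`. -/
def QStemIn {n : ℕ} {α : Type*} (B : NOrder n) (p : PartialOrder α) : Prop :=
  ∃ b : FinOrd n, ⟦b⟧ = B ∧ StemIn b p

/-- The set of `k`-stems of `p`, as a set of `k`-orders. -/
def stems (k : ℕ) {α : Type*} (p : PartialOrder α) : Set (NOrder k) :=
  {B | QStemIn B p}

/-- Stem relation between unlabeled finite orders: `S` is a stem in `T`. -/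
def NStemIn {n m : ℕ} (S : NOrder n) (T : NOrder m) : Prop :=
  ∃ t : FinOrd m, ⟦t⟧ = T ∧ QStemIn S t

/-- An order is past-finite if every element has finitely many elements below it. -/
def PastFinite {α : Type*} (p : PartialOrder α) : Prop :=
  ∀ x : α, {y : α | p.lt y x}.Finite

/-- The operation sending a set of `n`-orders to the set of `(n-1)`-stems of its
elements. -/
def Ominus (n : ℕ) (Γ : Set (NOrder n)) : Set (NOrder (n - 1)) :=
  {B | ∃ A ∈ Γ, NStemIn B A}

/-- The `j`-fold iterate of `Ominus`. -/
def OminusIter : (j : ℕ) → (n : ℕ) → Set (NOrder n) → Set (NOrder (n - j))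
  | 0, _, Γ => Γ
  | j + 1, n, Γ => Ominus (n - j) (OminusIter j n Γ)

/-- `Γ` is a node of covtree at level `n`: it is nonempty and has a certificate,
i.e. a (finite or countably infinite) past-finite order whose set of `n`-stems
is exactly `Γ`. -/
def IsNode (n : ℕ) (Γ : Set (NOrder n)) : Prop :=
  Γ.Nonempty ∧ ∃ (α : Type) (p : PartialOrder α), Countable α ∧ PastFinite p ∧
    stems n p = Γ

/-- An infinite path in covtree, starting at the root: for each `n` a node of
covtree at level `n` (a nonempty set of `n`-orders admitting a certificate),
each node being directly below the next via the `O₋` operation.  (Level `0`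
carries the trivial node consisting of the empty order.) -/
structure CovPath where
  node : (n : ℕ) → Set (NOrder n)
  nonempty : ∀ n, (node n).Nonempty
  isNode : ∀ n, IsNode n (node n)
  link : ∀ n, Ominus (n + 1) (node (n + 1)) = node n

/-- A naturally labeled infinite causet: a partial order on `ℕ` in which
`i ≺ j` implies `i < j` (hence past-finite). -/
def NatCauset := {p : PartialOrder ℕ // ∀ i j : ℕ, p.lt i j → i < j}

instance natSetoid : Setoid NatCauset where
  r p q := Nonempty (p.val.le ≃r q.val.le)
  iseqv := by
    refine ⟨fun p => ⟨RelIso.refl _⟩, ?_, ?_⟩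
    · rintro p q ⟨e⟩; exact ⟨e.symm⟩
    · rintro p q r ⟨e⟩ ⟨f⟩; exact ⟨e.trans f⟩

/-- The space `Ω` of infinite orders: isomorphism classes of countable
past-finite infinite causets. -/
def InfOrd := Quotient natSetoid

/-- The set of `n`-stems of an infinite order. -/
def Nstems (n : ℕ) (C : InfOrd) : Set (NOrder n) :=
  {B | ∃ c : NatCauset, ⟦c⟧ = C ∧ QStemIn B c.val}

/-- The stem set of an `n`-order `B`: the set of infinite orders containing `B`
as a stem. -/
def stemSet {n : ℕ} (B : NOrder n) : Set InfOrd :=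
  {C | B ∈ Nstems n C}

/-- The certificate set of a set `Γ` of `n`-orders: the set of infinite orders
whose set of `n`-stems is exactly `Γ`. -/
def certSet {n : ℕ} (Γ : Set (NOrder n)) : Set InfOrd :=
  {C | Nstems n C = Γ}

/-- The rogue equivalence relation: two infinite orders are equivalent iff they
have the same `n`-stems for every `n`. -/
instance rogueSetoid : Setoid InfOrd where
  r A B := ∀ n, Nstems n A = Nstems n B
  iseqv := by
    refine ⟨fun A n => rfl, ?_, ?_⟩
    · intro A B h n; exact (h n).symm
    · intro A B C h h' n; exact (h n).trans (h' n)

/-- The quotient `Ω/∼_R` of infinite orders by the rogue equivalence. -/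
def RQuot := Quotient rogueSetoid

open scoped Classical in
/-- The distance between two infinite orders: `2⁻ⁿ` where `n` is the largest
integer such that the two orders have the same set of `n`-stems, and `0` if
they have the same stems of every cardinality. -/
noncomputable def preDist (A B : InfOrd) : ℝ :=
  if ∀ n, Nstems n A = Nstems n B then 0
  else (2 : ℝ)⁻¹ ^ sSup {k : ℕ | Nstems k A = Nstems k B}

/-- The induced metric on the quotient `Ω/∼_R`. -/
noncomputable def rdist : RQuot → RQuot → ℝ :=
  Quotient.lift₂ preDist (by
    intro a b a' b' ha hb
    have h : ∀ k, (Nstems k a = Nstems k b) ↔ (Nstems k a' = Nstems k b') := by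
      intro k; rw [ha k, hb k]
    unfold preDist
    by_cases hall : ∀ n, Nstems n a = Nstems n b
    · rw [if_pos hall, if_pos (fun n => (h n).mp (hall n))]
    · rw [if_neg hall, if_neg (fun hc => hall (fun n => (h n).mpr (hc n)))]
      congr 1
      apply congrArg
      ext k
      exact h k)

/-- The image of a certificate set in the quotient `Ω/∼_R`. -/
def certR {n : ℕ} (Γ : Set (NOrder n)) : Set RQuot :=
  (fun C : InfOrd => (⟦C⟧ : RQuot)) '' certSet Γ

/-- The diameter of a subset of `Ω/∼_R`: the supremum of distances between its
points. -/
noncomputable def rdiam (S : Set RQuot) : ℝ :=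
  sSup {r : ℝ | ∃ x ∈ S, ∃ y ∈ S, rdist x y = r}

/-!
Both claims rest on one realization result: if every `Γ n` is nonempty and, for each `N`, the
levels `Γ 0, …, Γ N` are the stem sets of a single past-finite order, then some naturally
labelled infinite causet has `Γ n` as its set of `n`-stems for every `n`. It is the union of a
chain of naturally labelled finite orders, each one a stem of a certificate of enough levels,
extending its predecessor and absorbing the next member of an enumeration of the countable set
`⋃ₙ Γ n`; every stem of the union already lies in some member of the chain, hence in the
right level.

A Cauchy sequence has eventually constant `n`-stems for each `n`, which yields such a family;
along a covtree path it is supplied by the certificate of level `N`, because `O₋` of the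
`(k+1)`-stems of a past-finite order is its set of `k`-stems. Uniqueness in the intersection is
immediate: a point of `Ω/∼_R` is determined by its stems.
-/

open Function Set Filter

variable {α β : Type*} {n m k : ℕ}

section LowerSet

variable [PartialOrder α]

theorem exists_linearExtension_enum (s : Finset α) (hk : s.card = k) :
    ∃ g : Fin k → α, Injective g ∧ range g = s ∧ ∀ i j, g i < g j → i < j := by
  let e : Fin k ↪o LinearExtension α := Finset.orderEmbOfFin (α := LinearExtension α) s hk
  have hmono : StrictMono (toLinearExtension : α →o LinearExtension α) :=
    toLinearExtension.monotone.strictMono_of_injective injective_id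
  exact ⟨e, e.injective, Finset.range_orderEmbOfFin (α := LinearExtension α) s hk,
    fun i j hij => e.lt_iff_lt.1 (hmono hij)⟩

theorem IsLowerSet.exists_insert (hfin : ∀ x : α, (Iio x).Finite) {s : Set α}
    (hs : IsLowerSet s) (hne : sᶜ.Nonempty) : ∃ x ∉ s, IsLowerSet (insert x s) := by
  obtain ⟨y, hy⟩ := hne
  have hK : (Iic y ∩ sᶜ).Finite := by
    rw [← Iio_insert]
    exact ((hfin y).insert y).inter_of_left _
  obtain ⟨x, -, hx⟩ := hK.exists_le_minimal ⟨le_rfl, hy⟩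
  refine ⟨x, hx.prop.2, ?_⟩
  rintro a b hba (rfl | ha)
  · rcases hba.lt_or_eq with hlt | rfl
    · by_contra hb
      exact hx.not_lt ⟨hba.trans hx.prop.1, fun h => hb (mem_insert_of_mem _ h)⟩ hlt
    · exact mem_insert _ _
  · exact mem_insert_of_mem _ (hs hba ha)

theorem IsLowerSet.exists_finset_superset_card_eq (hfin : ∀ x : α, (Iio x).Finite)
    {s : Finset α} (hs : IsLowerSet (s : Set α)) {M : ℕ} (hsM : s.card ≤ M)
    {u : Finset α} (hu : M ≤ u.card) :
    ∃ t : Finset α, s ⊆ t ∧ IsLowerSet (t : Set α) ∧ t.card = M := by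
  classical
  obtain ⟨d, hd⟩ := Nat.exists_eq_add_of_le hsM
  induction d generalizing s with
  | zero => exact ⟨s, subset_rfl, hs, hd.symm⟩
  | succ d ih =>
    obtain ⟨y, -, hy⟩ := Finset.exists_mem_notMem_of_card_lt_card (s := s) (t := u) (by omega)
    obtain ⟨x, hx, hins⟩ := hs.exists_insert hfin ⟨y, hy⟩
    have hcard : (insert x s).card = s.card + 1 := Finset.card_insert_of_notMem hx
    obtain ⟨t, hst, ht, htM⟩ := ih (s := insert x s) (by simpa using hins) (by omega) (by omega)
    exact ⟨t, (Finset.subset_insert x s).trans hst, ht, htM⟩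

theorem Fin.range_append {γ : Type*} (f : Fin m → γ) (g : Fin k → γ) :
    range (Fin.append f g) = range f ∪ range g := by
  ext x
  constructor
  · rintro ⟨i, rfl⟩
    induction i using Fin.addCases <;> simp
  · rintro (⟨i, rfl⟩ | ⟨i, rfl⟩)
    exacts [⟨Fin.castAdd k i, Fin.append_left f g i⟩, ⟨Fin.natAdd m i, Fin.append_right f g i⟩]

theorem exists_linearExtension_append {f : Fin m → α} (hf : Injective f)
    (hfnat : ∀ i j, f i < f j → i < j) (hlow : IsLowerSet (range f))
    {t : Finset α} (hft : range f ⊆ t) (hcard : t.card = m + k) :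
    ∃ g : Fin k → α, Injective (Fin.append f g) ∧ range (Fin.append f g) = t ∧
      ∀ i j, Fin.append f g i < Fin.append f g j → i < j := by
  classical
  have hfcard : (Finset.univ.image f).card = m := by
    rw [Finset.card_image_of_injective _ hf, Finset.card_fin]
  have hsub : Finset.univ.image f ⊆ t := fun x hx => hft (by simpa using hx)
  obtain ⟨g, hg, hgrange, hgnat⟩ := exists_linearExtension_enum (k := k) (t \ Finset.univ.image f)
    (by rw [Finset.card_sdiff_of_subset hsub, hcard, hfcard]; omega)
  have hgf : ∀ i, g i ∉ range f := fun i h => by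
    have : g i ∈ ((t \ Finset.univ.image f : Finset α) : Set α) := hgrange ▸ mem_range_self i
    simp_all
  refine ⟨g, Fin.append_injective_iff.2 ⟨hf, hg, fun i j h => hgf j ⟨i, h⟩⟩, ?_, ?_⟩
  · rw [Fin.range_append, hgrange, Finset.coe_sdiff, Fintype.coe_image_univ,
      union_sdiff_cancel hft]
  · intro i j
    induction i using Fin.addCases <;> induction j using Fin.addCases <;>
      simp only [Fin.append_left, Fin.append_right]
    · exact hfnat _ _
    · exact fun _ => by simp only [Fin.lt_def, Fin.val_castAdd, Fin.val_natAdd]; omega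
    · exact fun h => absurd (hlow h.le (mem_range_self _)) (hgf _)
    · exact fun h => (Fin.natAdd_lt_natAdd_iff m).2 (hgnat _ _ h)

end LowerSet

theorem lt_iff_lt_of_forall_le_iff {p : PartialOrder α} {q : PartialOrder β} {f : α → β}
    (hf : ∀ i j, p.le i j ↔ q.le (f i) (f j)) (i j : α) : p.lt i j ↔ q.lt (f i) (f j) := by
  rw [p.lt_iff_le_not_ge, q.lt_iff_le_not_ge, hf, hf]

/-- `StemIn b p` unfolds to `∃ f, IsStemEmbedding b p f`. -/
def IsStemEmbedding (b : FinOrd n) (p : PartialOrder α) (f : Fin n → α) : Prop :=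
  Injective f ∧ (∀ i j, b.le i j ↔ p.le (f i) (f j)) ∧ ∀ i y, p.lt y (f i) → y ∈ range f

theorem IsStemEmbedding.isLowerSet_range {b : FinOrd n} {p : PartialOrder α} {f : Fin n → α}
    (hf : IsStemEmbedding b p f) : letI := p; IsLowerSet (range f) := by
  rintro _ y hy ⟨i, rfl⟩
  rcases hy.lt_or_eq with hlt | rfl
  · exact hf.2.2 i y hlt
  · exact mem_range_self i

namespace StemIn

theorem trans {B : FinOrd n} {t : FinOrd m} {p : PartialOrder α}
    (h₁ : StemIn B t) (h₂ : StemIn t p) : StemIn B p := by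
  obtain ⟨f, hf, hfle, hfdown⟩ := h₁
  obtain ⟨g, hg, hgle, hgdown⟩ := h₂
  refine ⟨g ∘ f, hg.comp hf, fun i j => (hfle i j).trans (hgle _ _), fun i y hy => ?_⟩
  obtain ⟨j, rfl⟩ := hgdown (f i) y hy
  obtain ⟨j', rfl⟩ := hfdown i j ((lt_iff_lt_of_forall_le_iff hgle j (f i)).2 hy)
  exact ⟨j', rfl⟩

theorem of_relIso_left {b b' : FinOrd n} {p : PartialOrder α} (e : b.le ≃r b'.le)
    (h : StemIn b' p) : StemIn b p := by
  obtain ⟨f, hf, hfle, hfdown⟩ := h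
  refine ⟨f ∘ e, hf.comp e.injective, fun i j => e.map_rel_iff.symm.trans (hfle _ _),
    fun i y hy => ?_⟩
  obtain ⟨j, rfl⟩ := hfdown (e i) y hy
  exact ⟨e.symm j, by simp⟩

theorem map_relIso {b : FinOrd n} {p : PartialOrder α} {q : PartialOrder β}
    (e : p.le ≃r q.le) (h : StemIn b p) : StemIn b q := by
  obtain ⟨f, hf, hfle, hfdown⟩ := h
  have he := lt_iff_lt_of_forall_le_iff (f := e) fun x y => e.map_rel_iff.symm
  refine ⟨e ∘ f, e.injective.comp hf, fun i j => (hfle i j).trans e.map_rel_iff.symm,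
    fun i y hy => ?_⟩
  obtain ⟨j, hj⟩ := hfdown i (e.symm y) ((he _ _).2 (by simpa using hy))
  exact ⟨j, by simp [hj]⟩

theorem of_mk_mem_stems {t : FinOrd m} {p : PartialOrder α}
    (h : (⟦t⟧ : NOrder m) ∈ stems m p) : StemIn t p := by
  obtain ⟨t', ht', hstem⟩ := h
  obtain ⟨e⟩ := Quotient.exact ht'
  exact hstem.of_relIso_left e.symm

end StemIn

namespace QStemIn

theorem trans_stemIn {B : NOrder n} {t : FinOrd m} {p : PartialOrder α}
    (h₁ : QStemIn B t) (h₂ : StemIn t p) : QStemIn B p :=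
  let ⟨b, hb, hs⟩ := h₁
  ⟨b, hb, hs.trans h₂⟩

theorem le {B : NOrder n} {t : FinOrd m} (h : QStemIn B t) : n ≤ m :=
  let ⟨_, _, f, hf, _⟩ := h
  Fin.le_of_injective f hf

end QStemIn

abbrev FinOrd.induced (p : PartialOrder α) (f : Fin n → α) (hf : Injective f) : FinOrd n :=
  letI := p; PartialOrder.lift f hf

theorem mk_induced_mem_stems {p : PartialOrder α} {g : Fin k → α} (hg : Injective g)
    (hlow : letI := p; IsLowerSet (range g)) : ⟦FinOrd.induced p g hg⟧ ∈ stems k p :=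
  ⟨_, rfl, g, hg, fun _ _ => Iff.rfl, fun i _ hy => hlow hy.le (mem_range_self i)⟩

theorem IsStemEmbedding.stemIn_induced {b : FinOrd k} {p : PartialOrder α} {f : Fin k → α}
    (hf : IsStemEmbedding b p f) {g : Fin n → α} (hg : Injective g) (hfg : range f ⊆ range g) :
    StemIn b (FinOrd.induced p g hg) := by
  obtain ⟨hfinj, hfle, hfdown⟩ := hf
  choose h hh using fun i => hfg (mem_range_self i)
  refine ⟨h, fun i j hij => hfinj (by rw [← hh, ← hh, hij]), fun i j => ?_, fun i y hy => ?_⟩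
  · rw [hfle, ← hh, ← hh]
    rfl
  · obtain ⟨j, hj⟩ := hfdown i (g y) (by rw [← hh i]; exact hy)
    exact ⟨j, hg (by rw [hh, hj])⟩

theorem stems_nonempty {p : PartialOrder α} (hpf : PastFinite p) {u : Finset α}
    (hu : k ≤ u.card) : (stems k p).Nonempty := by
  let _ := p
  obtain ⟨t, -, ht, hcard⟩ := IsLowerSet.exists_finset_superset_card_eq hpf (s := ∅)
    (by rw [Finset.coe_empty]; exact isLowerSet_empty) (Nat.zero_le k) hu
  obtain ⟨g, hg, hgt, -⟩ := exists_linearExtension_enum t hcard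
  exact ⟨_, mk_induced_mem_stems hg (hgt ▸ ht)⟩

theorem ominus_stems_succ {p : PartialOrder α} (hpf : PastFinite p)
    (hne : (stems (k + 1) p).Nonempty) : Ominus (k + 1) (stems (k + 1) p) = stems k p := by
  classical
  let _ := p
  refine Subset.antisymm ?_ ?_
  · rintro B ⟨A, hA, t, rfl, hB⟩
    exact hB.trans_stemIn (StemIn.of_mk_mem_stems hA)
  · rintro B ⟨b, hb, f, (hf : IsStemEmbedding b p f)⟩
    obtain ⟨-, -, -, F, hF, -⟩ := hne
    obtain ⟨t, hft, ht, hcard⟩ := IsLowerSet.exists_finset_superset_card_eq hpf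
      (s := Finset.univ.image f) (M := k + 1)
      (by simpa [Fintype.coe_image_univ] using hf.isLowerSet_range)
      (by simp [Finset.card_image_of_injective _ hf.1]) (u := Finset.univ.image F)
      (by simp [Finset.card_image_of_injective _ hF])
    obtain ⟨g, hg, hgt, -⟩ := exists_linearExtension_enum t hcard
    refine ⟨_, mk_induced_mem_stems hg (hgt ▸ ht), _, rfl, b, hb, hf.stemIn_induced hg ?_⟩
    rw [hgt, ← Fintype.coe_image_univ]
    exact Finset.coe_subset.2 hft

namespace NatCauset

theorem pastFinite (c : NatCauset) : PastFinite c.val :=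
  fun x => (finite_Iio x).subset fun y hy => c.prop y x hy

theorem stems_nonempty (c : NatCauset) (k : ℕ) : (stems k c.val).Nonempty :=
  _root_.stems_nonempty c.pastFinite (u := Finset.range k) (by simp)

end NatCauset

theorem nstems_mk (n : ℕ) (c : NatCauset) : Nstems n ⟦c⟧ = stems n c.val := by
  ext B
  refine ⟨?_, fun h => ⟨c, rfl, h⟩⟩
  rintro ⟨c', hc', b, hb, hs⟩
  obtain ⟨e⟩ := Quotient.exact hc'
  exact ⟨b, hb, hs.map_relIso e⟩

theorem nstems_ominus (k : ℕ) (C : InfOrd) :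
    Ominus (k + 1) (Nstems (k + 1) C) = Nstems k C := by
  induction C using Quotient.inductionOn with
  | h c => rw [nstems_mk, nstems_mk, ominus_stems_succ c.pastFinite (c.stems_nonempty _)]

theorem nstems_eq_of_le {A B : InfOrd} (h : Nstems n A = Nstems n B) (hkn : k ≤ n) :
    Nstems k A = Nstems k B := by
  induction hkn using Nat.decreasingInduction with
  | self => exact h
  | of_succ k _ ih => rw [← nstems_ominus, ih, nstems_ominus]

theorem bddAbove_setOf_nstems_eq {A B : InfOrd} (h : ¬∀ n, Nstems n A = Nstems n B) :
    BddAbove {k | Nstems k A = Nstems k B} := by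
  obtain ⟨t, ht⟩ := not_forall.1 h
  exact ⟨t, fun k hk => le_of_not_gt fun htk => ht (nstems_eq_of_le hk htk.le)⟩

def RQuot.stems (n : ℕ) : RQuot → Set (NOrder n) :=
  Quotient.lift (Nstems n) fun _ _ h => h n

namespace RQuot

theorem ext {x y : RQuot} (h : ∀ n, x.stems n = y.stems n) : x = y := by
  induction x using Quotient.inductionOn
  induction y using Quotient.inductionOn
  exact Quotient.sound h

theorem mem_certR_iff {Γ : Set (NOrder n)} {x : RQuot} : x ∈ certR Γ ↔ x.stems n = Γ := by
  induction x using Quotient.inductionOn with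
  | h A =>
    refine ⟨?_, fun h => ⟨A, h, rfl⟩⟩
    rintro ⟨C, hC, hCA⟩
    rw [← hCA]
    exact hC

theorem exists_natCauset (x : RQuot) :
    ∃ c : NatCauset, ∀ n, x.stems n = _root_.stems n c.val := by
  induction x using Quotient.inductionOn with
  | h A =>
    obtain ⟨c, rfl⟩ := Quotient.exists_rep A
    exact ⟨c, fun n => nstems_mk n c⟩

theorem stems_nonempty (x : RQuot) (n : ℕ) : (x.stems n).Nonempty := by
  obtain ⟨c, hc⟩ := x.exists_natCauset
  exact hc n ▸ c.stems_nonempty n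

theorem stems_eq_of_rdist_lt {x y : RQuot} (h : rdist x y < 2⁻¹ ^ n) :
    x.stems n = y.stems n := by
  induction x, y using Quotient.inductionOn₂ with
  | h A B =>
    change preDist A B < _ at h
    unfold preDist at h
    split_ifs at h with hall
    · exact hall n
    · have hlt : n < sSup {k | Nstems k A = Nstems k B} :=
        (pow_lt_pow_iff_right_of_lt_one₀ (by norm_num) (by norm_num)).1 h
      have hne : {k | Nstems k A = Nstems k B}.Nonempty :=
        nonempty_iff_ne_empty.2 fun hemp => by simp [hemp] at hlt
      exact nstems_eq_of_le (Nat.sSup_mem hne (bddAbove_setOf_nstems_eq hall)) hlt.le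

theorem rdist_le_of_stems_eq {x y : RQuot} (h : x.stems n = y.stems n) :
    rdist x y ≤ 2⁻¹ ^ n := by
  induction x, y using Quotient.inductionOn₂ with
  | h A B =>
    change preDist A B ≤ _
    unfold preDist
    split_ifs with hall
    · positivity
    · exact pow_le_pow_of_le_one (by norm_num) (by norm_num)
        (le_csSup (bddAbove_setOf_nstems_eq hall) h)

end RQuot

structure NatChain where
  size : ℕ → ℕ
  ord : ∀ k, FinOrd (size k)
  natural : ∀ k i j, (ord k).lt i j → (i : ℕ) < j
  size_lt_succ : ∀ k, size k < size (k + 1)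
  le_iff_succ : ∀ k i j, (ord k).le i j ↔
    (ord (k + 1)).le (Fin.castLE (size_lt_succ k).le i) (Fin.castLE (size_lt_succ k).le j)

namespace NatChain

variable (C : NatChain) {i j l : ℕ}

theorem size_mono : Monotone C.size :=
  (strictMono_nat_of_lt_succ C.size_lt_succ).monotone

theorem lt_size_of_lt (h : i < k) : i < C.size k :=
  h.trans_le (strictMono_nat_of_lt_succ C.size_lt_succ).le_apply

theorem le_iff_le_of_le (hkl : k ≤ l) (hi : i < C.size k) (hj : j < C.size k)
    (hi' : i < C.size l) (hj' : j < C.size l) :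
    (C.ord k).le ⟨i, hi⟩ ⟨j, hj⟩ ↔ (C.ord l).le ⟨i, hi'⟩ ⟨j, hj'⟩ := by
  induction l, hkl using Nat.le_induction with
  | base => rfl
  | succ l hkl ih =>
    exact (ih (hi.trans_le (C.size_mono hkl)) (hj.trans_le (C.size_mono hkl))).trans
      (C.le_iff_succ l _ _)

theorem le_iff_le (hi : i < C.size k) (hj : j < C.size k) (hi' : i < C.size l)
    (hj' : j < C.size l) : (C.ord k).le ⟨i, hi⟩ ⟨j, hj⟩ ↔ (C.ord l).le ⟨i, hi'⟩ ⟨j, hj'⟩ := by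
  rcases le_total k l with hkl | hlk
  exacts [C.le_iff_le_of_le hkl .., (C.le_iff_le_of_le hlk ..).symm]

def limitLE (i j : ℕ) : Prop :=
  (C.ord (max i j + 1)).le ⟨i, C.lt_size_of_lt (by omega)⟩ ⟨j, C.lt_size_of_lt (by omega)⟩

theorem limitLE_iff (hi : i < C.size k) (hj : j < C.size k) :
    C.limitLE i j ↔ (C.ord k).le ⟨i, hi⟩ ⟨j, hj⟩ :=
  C.le_iff_le ..

abbrev limitOrder : PartialOrder ℕ where
  le := C.limitLE
  lt i j := C.limitLE i j ∧ ¬C.limitLE j i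
  lt_iff_le_not_ge _ _ := Iff.rfl
  le_refl i := (C.limitLE_iff _ _).2 ((C.ord (i + 1)).le_refl ⟨i, C.lt_size_of_lt (by omega)⟩)
  le_trans i j l hij hjl := by
    have h : ∀ {x}, x ≤ max (max i j) l → x < C.size (max (max i j) l + 1) :=
      fun hx => C.lt_size_of_lt (Nat.lt_succ_of_le hx)
    rw [C.limitLE_iff (h (by omega)) (h (by omega))] at hij hjl ⊢
    exact (C.ord _).le_trans _ _ _ hij hjl
  le_antisymm i j hij hji := by
    have h : ∀ {x}, x ≤ max i j → x < C.size (max i j + 1) :=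
      fun hx => C.lt_size_of_lt (Nat.lt_succ_of_le hx)
    rw [C.limitLE_iff (h (le_max_left i j)) (h (le_max_right i j))] at hij
    rw [C.limitLE_iff (h (le_max_right i j)) (h (le_max_left i j))] at hji
    exact congrArg Fin.val ((C.ord _).le_antisymm _ _ hij hji)

theorem limitOrder_lt_iff (hi : i < C.size k) (hj : j < C.size k) :
    C.limitOrder.lt i j ↔ (C.ord k).lt ⟨i, hi⟩ ⟨j, hj⟩ := by
  rw [(C.ord k).lt_iff_le_not_ge, ← C.limitLE_iff, ← C.limitLE_iff]
  rfl

def limit : NatCauset :=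
  ⟨C.limitOrder, fun i j hij =>
    C.natural _ _ _ ((C.limitOrder_lt_iff (k := max i j + 1)
      (C.lt_size_of_lt (Nat.lt_succ_of_le (le_max_left i j)))
      (C.lt_size_of_lt (Nat.lt_succ_of_le (le_max_right i j)))).1 hij)⟩

theorem stemIn_limit (k : ℕ) : StemIn (C.ord k) C.limit.val :=
  ⟨Fin.val, Fin.val_injective, fun i j => (C.limitLE_iff i.2 j.2).symm,
    fun i y hy => ⟨⟨y, (C.limit.2 y i hy).trans i.2⟩, rfl⟩⟩

theorem exists_stemIn_ord {b : FinOrd n} (h : StemIn b C.limit.val) :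
    ∃ k, StemIn b (C.ord k) := by
  obtain ⟨f, hf, hfle, hfdown⟩ := h
  have hK : ∀ i, f i < C.size (Finset.univ.sup f + 1) := fun i =>
    C.lt_size_of_lt (Nat.lt_succ_of_le (Finset.le_sup (Finset.mem_univ i)))
  refine ⟨_, fun i => ⟨f i, hK i⟩, fun i j hij => hf (congrArg Fin.val hij),
    fun i j => (hfle i j).trans (C.limitLE_iff _ _), fun i y hy => ?_⟩
  obtain ⟨j, hj⟩ := hfdown i y ((C.limitOrder_lt_iff y.2 (hK i)).2 hy)
  exact ⟨j, Fin.ext hj⟩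

end NatChain

instance (n : ℕ) : Finite (NOrder n) :=
  have : Finite (FinOrd n) := Finite.of_injective (fun q : FinOrd n => q.le) fun _ _ h =>
    PartialOrder.ext fun x y => iff_of_eq (congrFun (congrFun h x) y)
  inferInstanceAs (Finite (Quotient (ordSetoid n)))

def FinitelyCertified (Γ : ∀ n, Set (NOrder n)) : Prop :=
  ∀ N : ℕ, ∃ (α : Type) (p : PartialOrder α), PastFinite p ∧ ∀ k ≤ N, stems k p = Γ k

/-- A finite stage in the construction of a certificate of all the levels `Γ n`. -/
structure Approximant (Γ : ∀ n, Set (NOrder n)) where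
  size : ℕ
  ord : FinOrd size
  mem : ⟦ord⟧ ∈ Γ size
  natural : ∀ i j, ord.lt i j → (i : ℕ) < j

section Realization

variable {Γ : ∀ n, Set (NOrder n)}

theorem FinitelyCertified.mem_of_qStemIn (hΓ : FinitelyCertified Γ) {t : FinOrd m}
    (ht : ⟦t⟧ ∈ Γ m) {B : NOrder n} (hB : QStemIn B t) : B ∈ Γ n := by
  obtain ⟨α, p, -, hp⟩ := hΓ m
  rw [← hp n hB.le]
  exact hB.trans_stemIn (StemIn.of_mk_mem_stems (by rw [hp m le_rfl]; exact ht))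

theorem Approximant.exists_extension (hΓ : FinitelyCertified Γ) (hne : ∀ n, (Γ n).Nonempty)
    (a : Approximant Γ) {B : NOrder n} (hB : B ∈ Γ n) :
    ∃ (b : Approximant Γ) (h : a.size < b.size),
      (∀ i j, a.ord.le i j ↔ b.ord.le (Fin.castLE h.le i) (Fin.castLE h.le j)) ∧
        QStemIn B b.ord := by
  classical
  obtain ⟨α, p, hpf, hp⟩ := hΓ (a.size + (n + 1))
  let _ := p
  obtain ⟨f, (hf : IsStemEmbedding a.ord p f)⟩ : StemIn a.ord p :=
    StemIn.of_mk_mem_stems (by rw [hp _ (by omega)]; exact a.mem)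
  obtain ⟨b₀, rfl, g, (hg : IsStemEmbedding b₀ p g)⟩ : B ∈ stems n p := by
    rw [hp n (by omega)]; exact hB
  obtain ⟨-, -, -, F, hF, -⟩ : (stems (a.size + (n + 1)) p).Nonempty := by
    rw [hp _ le_rfl]; exact hne _
  have hfg : ((Finset.univ.image f ∪ Finset.univ.image g : Finset α) : Set α) =
      range f ∪ range g := by
    rw [Finset.coe_union, Fintype.coe_image_univ, Fintype.coe_image_univ]
  have hcard_le : (Finset.univ.image f ∪ Finset.univ.image g).card ≤ a.size + (n + 1) :=
    calc (Finset.univ.image f ∪ Finset.univ.image g).card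
        ≤ (Finset.univ.image f).card + (Finset.univ.image g).card := Finset.card_union_le _ _
      _ ≤ a.size + n := by gcongr <;> exact Finset.card_image_le.trans (by simp)
      _ ≤ a.size + (n + 1) := by omega
  obtain ⟨t, hst, ht, hcard⟩ := IsLowerSet.exists_finset_superset_card_eq hpf
    (hfg ▸ hf.isLowerSet_range.union hg.isLowerSet_range) hcard_le (u := Finset.univ.image F)
    (by simp [Finset.card_image_of_injective _ hF])
  have hst' : range f ∪ range g ⊆ t := hfg ▸ Finset.coe_subset.2 hst
  obtain ⟨e, he, het, henat⟩ := exists_linearExtension_append hf.1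
    (fun i j h => a.natural i j ((lt_iff_lt_of_forall_le_iff hf.2.1 i j).2 h))
    hf.isLowerSet_range (subset_union_left.trans hst') hcard
  refine ⟨⟨_, FinOrd.induced p _ he, ?_, henat⟩, Nat.lt_add_of_pos_right n.succ_pos,
    fun i j => ?_, b₀, rfl, hg.stemIn_induced he ?_⟩
  · rw [← hp _ le_rfl]
    exact mk_induced_mem_stems he (het ▸ ht)
  · rw [hf.2.1, ← Fin.append_left f e i, ← Fin.append_left f e j]
    rfl
  · rw [het]
    exact subset_union_right.trans hst'

namespace FinitelyCertified

theorem exists_natChain (hΓ : FinitelyCertified Γ) (hne : ∀ n, (Γ n).Nonempty) :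
    ∃ C : NatChain, (∀ k, ⟦C.ord k⟧ ∈ Γ (C.size k)) ∧
      ∀ n, ∀ B ∈ Γ n, ∃ k, QStemIn B (C.ord k) := by
  obtain ⟨B₀, hB₀⟩ := hne 0
  have : Nonempty {x : Σ n, NOrder n // x.2 ∈ Γ x.1} := ⟨⟨⟨0, B₀⟩, hB₀⟩⟩
  obtain ⟨τ, hτ⟩ := exists_surjective_nat {x : Σ n, NOrder n // x.2 ∈ Γ x.1}
  obtain ⟨b₀, rfl⟩ := Quotient.exists_rep B₀
  let next (k : ℕ) (a : Approximant Γ) : Approximant Γ :=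
    (a.exists_extension hΓ hne (τ k).2).choose
  let a (k : ℕ) : Approximant Γ := Nat.rec ⟨0, b₀, hB₀, fun i => i.elim0⟩ next k
  choose hlt hle hstem using fun k => ((a k).exists_extension hΓ hne (τ k).2).choose_spec
  refine ⟨⟨fun k => (a k).size, fun k => (a k).ord, fun k => (a k).natural, hlt, hle⟩,
    fun k => (a k).mem, fun n B hB => ?_⟩
  obtain ⟨k, hk⟩ := hτ ⟨⟨n, B⟩, hB⟩
  have hτk : ∀ x, τ k = x → QStemIn x.1.2 (a (k + 1)).ord := by
    rintro _ rfl
    exact hstem k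
  exact ⟨k + 1, hτk _ hk⟩

theorem exists_natCauset (hΓ : FinitelyCertified Γ) (hne : ∀ n, (Γ n).Nonempty) :
    ∃ c : NatCauset, ∀ n, stems n c.val = Γ n := by
  obtain ⟨C, hmem, hstem⟩ := hΓ.exists_natChain hne
  refine ⟨C.limit, fun n => Subset.antisymm ?_ fun B hB => ?_⟩
  · rintro B ⟨b, rfl, hb⟩
    obtain ⟨k, hk⟩ := C.exists_stemIn_ord hb
    exact hΓ.mem_of_qStemIn (hmem k) ⟨b, rfl, hk⟩
  · obtain ⟨k, hk⟩ := hstem n B hB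
    exact hk.trans_stemIn (C.stemIn_limit k)

theorem exists_rquot (hΓ : FinitelyCertified Γ) (hne : ∀ n, (Γ n).Nonempty) :
    ∃ x : RQuot, ∀ n, x.stems n = Γ n := by
  obtain ⟨c, hc⟩ := hΓ.exists_natCauset hne
  exact ⟨⟦⟦c⟧⟧, fun n => (nstems_mk n c).trans (hc n)⟩

theorem of_rquot (h : ∀ M, ∃ x : RQuot, ∀ k ≤ M, x.stems k = Γ k) : FinitelyCertified Γ := by
  intro M
  obtain ⟨x, hx⟩ := h M
  obtain ⟨c, hc⟩ := x.exists_natCauset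
  exact ⟨ℕ, c.val, c.pastFinite, fun k hk => (hc k).symm.trans (hx k hk)⟩

end FinitelyCertified

end Realization

namespace RQuot

theorem exists_stems_eq_of_eventually {u : ℕ → RQuot} {Γ : ∀ n, Set (NOrder n)}
    (h : ∀ n, ∀ᶠ i in atTop, (u i).stems n = Γ n) : ∃ x : RQuot, ∀ n, x.stems n = Γ n := by
  refine (FinitelyCertified.of_rquot fun M => ?_).exists_rquot fun n => ?_
  · obtain ⟨i, hi⟩ := ((eventually_all_finset (Finset.range (M + 1))).2 fun k _ => h k).exists
    exact ⟨u i, fun k hk => hi k (Finset.mem_range.2 (by omega))⟩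
  · obtain ⟨i, hi⟩ := (h n).exists
    exact hi ▸ (u i).stems_nonempty n

theorem exists_tendsto_of_cauchy (u : ℕ → RQuot)
    (hu : ∀ ε > (0 : ℝ), ∃ N : ℕ, ∀ i ≥ N, ∀ j ≥ N, rdist (u i) (u j) < ε) :
    ∃ x : RQuot, ∀ ε > (0 : ℝ), ∃ N : ℕ, ∀ i ≥ N, rdist (u i) x < ε := by
  choose N hN using fun n : ℕ => hu (2⁻¹ ^ n) (by positivity)
  have hstems (n i : ℕ) (hi : i ≥ N n) : (u i).stems n = (u (N n)).stems n :=
    stems_eq_of_rdist_lt (hN n i hi (N n) le_rfl)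
  obtain ⟨x, hx⟩ := exists_stems_eq_of_eventually fun n => eventually_atTop.2 ⟨N n, hstems n⟩
  refine ⟨x, fun ε hε => ?_⟩
  obtain ⟨n, hn⟩ := exists_pow_lt_of_lt_one hε (by norm_num : (2 : ℝ)⁻¹ < 1)
  exact ⟨N n, fun i hi => (rdist_le_of_stems_eq ((hstems n i hi).trans (hx n).symm)).trans_lt hn⟩

end RQuot

namespace CovPath

theorem stems_eq_node_of_le (P : CovPath) {p : PartialOrder α} (hpf : PastFinite p)
    {M : ℕ} (hM : stems M p = P.node M) (hk : k ≤ M) : stems k p = P.node k := by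
  induction hk using Nat.decreasingInduction with
  | self => exact hM
  | of_succ k _ ih => rw [← P.link k, ← ih, ominus_stems_succ hpf (ih ▸ P.nonempty (k + 1))]

theorem finitelyCertified (P : CovPath) : FinitelyCertified P.node := fun M =>
  let ⟨_, α, p, _, hpf, hM⟩ := P.isNode M
  ⟨α, p, hpf, fun _ hk => P.stems_eq_node_of_le hpf hM hk⟩

theorem existsUnique_mem_certR (P : CovPath) : ∃! x : RQuot, ∀ n, x ∈ certR (P.node n) := by
  simp only [RQuot.mem_certR_iff]
  obtain ⟨x, hx⟩ := P.finitelyCertified.exists_rquot P.nonempty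
  exact ⟨x, hx, fun y hy => RQuot.ext fun n => (hy n).trans (hx n).symm⟩

end CovPath

/-- The metric space `(Ω/∼_R, d)` is complete (every Cauchy
sequence for `rdist` converges), and consequently, for every infinite path
`{Γ₁, Γ₂, …}` in covtree, the nested intersection `⋂ₙ [cert(Γₙ)]_R` contains
exactly one point. -/
theorem rogue_quotient_complete_and_cantor :
    (∀ u : ℕ → RQuot,
      (∀ ε > (0 : ℝ), ∃ N : ℕ, ∀ i ≥ N, ∀ j ≥ N, rdist (u i) (u j) < ε) →
      ∃ x : RQuot, ∀ ε > (0 : ℝ), ∃ N : ℕ, ∀ i ≥ N, rdist (u i) x < ε) ∧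
    ∀ P : CovPath, ∃! x : RQuot, ∀ n : ℕ, x ∈ certR (P.node n) := by
  exact ⟨RQuot.exists_tendsto_of_cauchy, CovPath.existsUnique_mem_certR⟩
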